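/- arXiv:1705.09617 — 4 statements merged into one kernel-verified Lean document; each statement's English description precedes it below -/
import Mathlib

section
/- Let G be a graph of arboricity at most a with a nonnegative edge-weight function ω̄, and with no isolated vertices. Suppose each vertex v selects one incident edge of maximum weight (with ties broken so that each edge is selected with a fixed orientation), yielding a spanning sub(pseudo)forest F in which every vertex selects at most one outgoing edge. Then ω̄(F) ≥ ω̄(G)/(2a). -/
open Finset

/-- `G` has arboricity at most `a`: its edges can be partitioned into `a` forests. -/
def ArboricityLE {V : Type} (G : SimpleGraph V) (a : ℕ) : Prop :=
  ∃ col : Sym2 V → Fin a,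
    ∀ i : Fin a, (SimpleGraph.fromEdgeSet {e ∈ G.edgeSet | col e = i}).IsAcyclic

/-- Any finite acyclic graph with an edge has a leaf. -/
lemma exists_leaf_aux {V : Type} [Fintype V] {H : SimpleGraph V} (hac : H.IsAcyclic)
    {u0 v0 : V} (h0 : H.Adj u0 v0) :
    ∃ x y, H.Adj x y ∧ ∀ z, H.Adj x z → z = y := by
  classical
  have hP1 : ∃ (x y : V) (p : H.Walk x y), p.IsPath ∧ p.length = 1 :=
    ⟨u0, v0, SimpleGraph.Walk.cons h0 SimpleGraph.Walk.nil,
      by simp [SimpleGraph.Walk.cons_isPath_iff, h0.ne], by simp⟩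
  have hcard : 1 ≤ Fintype.card V := Fintype.card_pos_iff.mpr ⟨u0⟩
  obtain ⟨x, y, p, hp, hlen⟩ :=
    Nat.findGreatest_spec (P := fun n => ∃ (x y : V) (p : H.Walk x y), p.IsPath ∧ p.length = n)
      hcard hP1
  have hn1 : 1 ≤ Nat.findGreatest
      (fun n => ∃ (x y : V) (p : H.Walk x y), p.IsPath ∧ p.length = n) (Fintype.card V) :=
    Nat.le_findGreatest hcard hP1
  cases p with
  | nil => rw [SimpleGraph.Walk.length_nil] at hlen; omega
  | @cons _ c _ h r =>
    refine ⟨x, c, h, ?_⟩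
    intro z hz
    by_contra hzc
    by_cases hzs : z ∈ (SimpleGraph.Walk.cons h r).support
    · -- build a cycle, contradiction with acyclicity
      have hq := hp.takeUntil hzs
      have hne : ¬ s(z, x) ∈ ((SimpleGraph.Walk.cons h r).takeUntil z hzs).edges := by
        intro hmem
        have hmem' : s(z, x) ∈ (SimpleGraph.Walk.cons h r).edges :=
          SimpleGraph.Walk.edges_takeUntil_subset _ hzs hmem
        rw [SimpleGraph.Walk.edges_cons] at hmem'
        rcases List.mem_cons.mp hmem' with h1 | h1
        · rcases Sym2.eq_iff.mp h1 with ⟨h2, _⟩ | ⟨h2, _⟩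
          · exact hz.ne' h2
          · exact hzc h2
        · exact ((SimpleGraph.Walk.cons_isPath_iff h r).mp hp).2
            (SimpleGraph.Walk.snd_mem_support_of_mem_edges r h1)
      exact hac _ ((SimpleGraph.Walk.cons_isCycle_iff _ hz.symm).mpr ⟨hq, hne⟩)
    · -- extend the path, contradiction with maximality
      have hp' : (SimpleGraph.Walk.cons hz.symm (SimpleGraph.Walk.cons h r)).IsPath :=
        (SimpleGraph.Walk.cons_isPath_iff _ _).mpr ⟨hp, hzs⟩
      have hlt := hp'.length_lt
      rw [SimpleGraph.Walk.length_cons] at hlt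
      have hPm : ∃ (x' y' : V) (p : H.Walk x' y'), p.IsPath ∧
          p.length = (SimpleGraph.Walk.cons h r).length + 1 :=
        ⟨z, y, SimpleGraph.Walk.cons hz.symm (SimpleGraph.Walk.cons h r), hp',
          by rw [SimpleGraph.Walk.length_cons]⟩
      exact Nat.findGreatest_is_greatest
        (P := fun n => ∃ (x y : V) (p : H.Walk x y), p.IsPath ∧ p.length = n)
        (n := Fintype.card V) (k := (SimpleGraph.Walk.cons h r).length + 1)
        (by omega) (by omega) hPm

/-- For a finite forest (given as an edge set), one can injectively assign to each edge one of
its endpoints. -/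
lemma exists_inj_aux {V : Type} [Fintype V] [DecidableEq V] :
    ∀ S : Finset (Sym2 V), (∀ e ∈ S, ¬ e.IsDiag) →
    (SimpleGraph.fromEdgeSet (↑S : Set (Sym2 V))).IsAcyclic →
    ∃ f : Sym2 V → V, Set.InjOn f ↑S ∧ ∀ e ∈ S, f e ∈ e := by
  intro S
  induction S using Finset.strongInduction with
  | _ S ih =>
    intro hd hac
    rcases S.eq_empty_or_nonempty with rfl | ⟨e0, he0⟩
    · exact ⟨fun e => e.out.1, by simp, by simp⟩
    · obtain ⟨y0, he⟩ := Sym2.mem_iff_exists.mp (Sym2.out_fst_mem e0)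
      have hne0 : e0.out.1 ≠ y0 := by
        intro hcon
        exact hd e0 he0 (by rw [he, Sym2.mk_isDiag_iff]; exact hcon)
      have hadj : (SimpleGraph.fromEdgeSet (↑S : Set (Sym2 V))).Adj e0.out.1 y0 :=
        (SimpleGraph.fromEdgeSet_adj _).mpr ⟨by rw [← he]; exact Finset.mem_coe.mpr he0, hne0⟩
      obtain ⟨x, y, hxy, huniq⟩ := exists_leaf_aux hac hadj
      obtain ⟨he1, hxyne⟩ := (SimpleGraph.fromEdgeSet_adj _).mp hxy
      have he1' : s(x, y) ∈ S := Finset.mem_coe.mp he1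
      have hsub : S.erase s(x, y) ⊂ S := Finset.erase_ssubset he1'
      have hle : SimpleGraph.fromEdgeSet (↑(S.erase s(x, y)) : Set (Sym2 V)) ≤
          SimpleGraph.fromEdgeSet (↑S : Set (Sym2 V)) :=
        SimpleGraph.fromEdgeSet_mono (Finset.coe_subset.mpr (Finset.erase_subset _ _))
      have hac' : (SimpleGraph.fromEdgeSet (↑(S.erase s(x, y)) : Set (Sym2 V))).IsAcyclic :=
        fun v c hc => hac (c.mapLe hle) (hc.mapLe hle)
      obtain ⟨f', hinj', hmem'⟩ := ih _ hsub (fun e he => hd e (Finset.mem_of_mem_erase he)) hac'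
      have key : ∀ e ∈ S.erase s(x, y), f' e ≠ x := by
        intro e heS' hfx
        have hxe : x ∈ e := hfx ▸ hmem' e heS'
        obtain ⟨z, rfl⟩ := Sym2.mem_iff_exists.mp hxe
        have hzx : x ≠ z := by
          intro hcon
          exact hd _ (Finset.mem_of_mem_erase heS') (by rw [Sym2.mk_isDiag_iff]; exact hcon)
        have hz := huniq z ((SimpleGraph.fromEdgeSet_adj _).mpr
          ⟨Finset.mem_coe.mpr (Finset.mem_of_mem_erase heS'), hzx⟩)
        exact Finset.ne_of_mem_erase heS' (by rw [hz])
      refine ⟨fun e => if e = s(x, y) then x else f' e, ?_, ?_⟩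
      · intro d hdS e heS hde
        simp only at hde
        by_cases h1 : d = s(x, y) <;> by_cases h2 : e = s(x, y)
        · rw [h1, h2]
        · rw [if_pos h1, if_neg h2] at hde
          exact absurd hde.symm (key e (Finset.mem_erase.mpr ⟨h2, Finset.mem_coe.mp heS⟩))
        · rw [if_neg h1, if_pos h2] at hde
          exact absurd hde (key d (Finset.mem_erase.mpr ⟨h1, Finset.mem_coe.mp hdS⟩))
        · rw [if_neg h1, if_neg h2] at hde
          exact hinj'
            (Finset.mem_coe.mpr (Finset.mem_erase.mpr ⟨h1, Finset.mem_coe.mp hdS⟩))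
            (Finset.mem_coe.mpr (Finset.mem_erase.mpr ⟨h2, Finset.mem_coe.mp heS⟩)) hde
      · intro e heS
        by_cases h1 : e = s(x, y)
        · simp only [if_pos h1, h1]
          exact Sym2.mem_mk_left x y
        · simp only [if_neg h1]
          exact hmem' e (Finset.mem_erase.mpr ⟨h1, heS⟩)

/-- The total weight of a forest inside `G` is at most the sum of the selected edge weights. -/
lemma forest_sum_aux {V : Type} [Fintype V] [DecidableEq V] (G : SimpleGraph V)
    [DecidableRel G.Adj] (w : Sym2 V → ℝ) (hw : ∀ e, 0 ≤ w e) (sel : V → V)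
    (hmax : ∀ v u, G.Adj v u → w s(v, u) ≤ w s(v, sel v))
    (S : Finset (Sym2 V)) (hS : S ⊆ G.edgeFinset)
    (hac : (SimpleGraph.fromEdgeSet (↑S : Set (Sym2 V))).IsAcyclic) :
    ∑ e ∈ S, w e ≤ ∑ v : V, w s(v, sel v) := by
  have hd : ∀ e ∈ S, ¬ e.IsDiag := fun e he =>
    G.not_isDiag_of_mem_edgeSet (SimpleGraph.mem_edgeFinset.mp (hS he))
  obtain ⟨f, hinj, hmem⟩ := exists_inj_aux S hd hac
  have step : ∀ e ∈ S, w e ≤ w s(f e, sel (f e)) := by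
    intro e he
    obtain ⟨z, hez⟩ := Sym2.mem_iff_exists.mp (hmem e he)
    have hadj : G.Adj (f e) z := by
      rw [← SimpleGraph.mem_edgeSet, ← hez]
      exact SimpleGraph.mem_edgeFinset.mp (hS he)
    calc w e = w s(f e, z) := congrArg w hez
    _ ≤ _ := hmax _ _ hadj
  calc ∑ e ∈ S, w e ≤ ∑ e ∈ S, w s(f e, sel (f e)) := Finset.sum_le_sum step
  _ = ∑ v ∈ S.image f, w s(v, sel v) := by
      rw [Finset.sum_image (fun a ha b hb h =>
        hinj (Finset.mem_coe.mpr ha) (Finset.mem_coe.mpr hb) h)]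
  _ ≤ ∑ v : V, w s(v, sel v) :=
      Finset.sum_le_sum_of_subset_of_nonneg (Finset.subset_univ _) (fun _ _ _ => hw _)

/-- Let `G` be a graph of arboricity at most `a` with nonnegative edge weights and no isolated
vertices.  If each vertex `v` selects an incident edge `s(v, sel v)` of maximum weight, then the
resulting (pseudo-forest) edge set `F = {s(v, sel v) : v}` satisfies `ω̄(F) ≥ ω̄(G)/(2a)`. -/
theorem stmt6 {V : Type} [Fintype V] [DecidableEq V] (G : SimpleGraph V) [DecidableRel G.Adj]
    (a : ℕ) (ha : 1 ≤ a) (harb : ArboricityLE G a)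
    (w : Sym2 V → ℝ) (hw : ∀ e, 0 ≤ w e)
    (hiso : ∀ v : V, ∃ u, G.Adj v u)
    (sel : V → V) (hsel : ∀ v, G.Adj v (sel v))
    (hmax : ∀ v u, G.Adj v u → w s(v, u) ≤ w s(v, sel v)) :
    (∑ e ∈ G.edgeFinset, w e) / (2 * a) ≤
      ∑ e ∈ Finset.image (fun v => s(v, sel v)) Finset.univ, w e := by
  classical
  obtain ⟨col, hcol⟩ := harb
  have h1 : ∑ e ∈ G.edgeFinset, w e ≤ (a : ℝ) * ∑ v : V, w s(v, sel v) := by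
    rw [← Finset.sum_fiberwise G.edgeFinset col w]
    calc ∑ i : Fin a, ∑ e ∈ G.edgeFinset.filter (fun e => col e = i), w e
        ≤ ∑ _i : Fin a, ∑ v : V, w s(v, sel v) := by
          refine Finset.sum_le_sum fun i _ => ?_
          refine forest_sum_aux G w hw sel hmax _ (Finset.filter_subset _ _) ?_
          have hset : (↑(G.edgeFinset.filter (fun e => col e = i)) : Set (Sym2 V)) =
              {e ∈ G.edgeSet | col e = i} := by
            ext e
            simp [Set.mem_setOf_eq, SimpleGraph.mem_edgeFinset]
          rw [hset]
          exact hcol i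
      _ = (a : ℝ) * ∑ v : V, w s(v, sel v) := by
          rw [Finset.sum_const, Finset.card_univ, Fintype.card_fin, nsmul_eq_mul]
  have h2 : ∑ v : V, w s(v, sel v) ≤
      2 * ∑ e ∈ Finset.image (fun v => s(v, sel v)) Finset.univ, w e := by
    rw [← Finset.sum_fiberwise_of_maps_to
      (fun v _ => Finset.mem_image_of_mem (fun v => s(v, sel v)) (Finset.mem_univ v))
      (fun v => w s(v, sel v)), Finset.mul_sum]
    refine Finset.sum_le_sum fun e he => ?_
    have hcard : (Finset.univ.filter (fun v => s(v, sel v) = e)).card ≤ 2 := by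
      induction e using Sym2.ind with
      | _ x y =>
        have hsub : Finset.univ.filter (fun v => s(v, sel v) = s(x, y)) ⊆ {x, y} := by
          intro v hv
          rcases Sym2.eq_iff.mp (Finset.mem_filter.mp hv).2 with ⟨h1, -⟩ | ⟨h1, -⟩ <;>
            simp [h1]
        exact le_trans (Finset.card_le_card hsub)
          (le_trans (Finset.card_insert_le x {y}) (by simp))
    have hterm : ∀ v ∈ Finset.univ.filter (fun v => s(v, sel v) = e), w s(v, sel v) = w e := by
      intro v hv
      rw [(Finset.mem_filter.mp hv).2]
    rw [Finset.sum_congr rfl hterm, Finset.sum_const, nsmul_eq_mul]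
    have : ((Finset.univ.filter (fun v => s(v, sel v) = e)).card : ℝ) ≤ 2 := by
      exact_mod_cast hcard
    exact mul_le_mul_of_nonneg_right this (hw e)
  have hT : (0:ℝ) ≤ ∑ e ∈ Finset.image (fun v => s(v, sel v)) Finset.univ, w e :=
    Finset.sum_nonneg fun e _ => hw e
  have ha' : (0:ℝ) < a := by exact_mod_cast ha
  rw [div_le_iff₀ (by positivity)]
  nlinarith [mul_le_mul_of_nonneg_left h2 (le_of_lt ha')]
end

section
/- Taking a depth-1 minor of a depth-1 minor iteratively r times yields a depth-((3^r − 1)/2) minor of the original graph G. That is, if H₁ is a depth-1 minor of G and inductively H_{k+1} is a depth-1 minor of H_k, then H_r is a depth-((3^r − 1)/2) minor of G. -/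
/-- `H` is a depth-`r` minor of `G`: there are pairwise vertex-disjoint connected subgraphs of
`G` of radius at most `r` (each branch set has a center from which every vertex of the branch
set is reachable within distance `r` inside the branch set), one per vertex of `H`, such that
adjacent vertices of `H` have an edge of `G` between their branch sets. -/
def IsDepthMinor {V W : Type} (G : SimpleGraph V) (H : SimpleGraph W) (r : ℕ) : Prop :=
  ∃ B : W → Set V,
    (∀ w, ∃ c : B w, ∀ v : B w,
      (G.induce (B w)).Reachable c v ∧ (G.induce (B w)).dist c v ≤ r) ∧
    (Pairwise fun w₁ w₂ => Disjoint (B w₁) (B w₂)) ∧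
    ∀ ⦃w₁ w₂⦄, H.Adj w₁ w₂ → ∃ v₁ ∈ B w₁, ∃ v₂ ∈ B w₂, G.Adj v₁ v₂

/-!
A branch set of a depth-1 minor of a depth-`s` minor is a union of old branch sets along a star
of the middle graph. It has radius `3 s + 1` around the centre of the star's middle branch set:
go at most `s` to the edge towards a leaf branch set, cross it, and go at most `2 s` inside the
leaf. Iterating `s ↦ 3 s + 1` from `0` gives `(3 ^ r - 1) / 2`. Radii are measured with
`SimpleGraph.edist`, which, unlike `dist`, needs no separate reachability clause and satisfies the
triangle inequality unconditionally.
-/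

namespace SimpleGraph

variable {V V' : Type} {G : SimpleGraph V}

lemma reachable_and_dist_le_iff_edist_le {u v : V} {r : ℕ} :
    G.Reachable u v ∧ G.dist u v ≤ r ↔ G.edist u v ≤ r := by
  constructor
  · rintro ⟨hreach, hdist⟩
    rw [← hreach.coe_dist_eq_edist]
    exact_mod_cast hdist
  · intro h
    have hreach : G.Reachable u v := reachable_of_edist_ne_top (ne_top_of_le_ne_top (by simp) h)
    refine ⟨hreach, ?_⟩
    rw [← hreach.coe_dist_eq_edist] at h
    exact_mod_cast h

lemma edist_le_two_mul_of_forall_edist_le {c : V} {s : ℕ∞} (h : ∀ v, G.edist c v ≤ s)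
    (a b : V) : G.edist a b ≤ 2 * s :=
  calc G.edist a b ≤ G.edist a c + G.edist c b := G.edist_triangle
    _ = G.edist c a + G.edist c b := by rw [G.edist_comm]
    _ ≤ s + s := add_le_add (h a) (h b)
    _ = 2 * s := (two_mul s).symm

lemma edist_map_le {G' : SimpleGraph V'} (f : G →g G') (u v : V) :
    G'.edist (f u) (f v) ≤ G.edist u v := by
  by_cases hreach : G.Reachable u v
  · obtain ⟨p, hp⟩ := hreach.exists_walk_length_eq_edist
    rw [← hp, ← Walk.length_map f p]
    exact edist_le _
  · simp [edist_eq_top_of_not_reachable hreach]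

lemma edist_induce_le_of_subset {s t : Set V} (hst : s ⊆ t) {u v : V} (hu : u ∈ s)
    (hv : v ∈ s) :
    (G.induce t).edist ⟨u, hst hu⟩ ⟨v, hst hv⟩ ≤ (G.induce s).edist ⟨u, hu⟩ ⟨v, hv⟩ :=
  edist_map_le (G.induceHomOfLE hst).toHom ⟨u, hu⟩ ⟨v, hv⟩

end SimpleGraph

open SimpleGraph

lemma isDepthMinor_iff_edist {V W : Type} {G : SimpleGraph V} {H : SimpleGraph W} {r : ℕ} :
    IsDepthMinor G H r ↔ ∃ B : W → Set V,
      (∀ w, ∃ c : B w, ∀ v : B w, (G.induce (B w)).edist c v ≤ r) ∧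
      (Pairwise fun w₁ w₂ => Disjoint (B w₁) (B w₂)) ∧
      ∀ ⦃w₁ w₂⦄, H.Adj w₁ w₂ → ∃ v₁ ∈ B w₁, ∃ v₂ ∈ B w₂, G.Adj v₁ v₂ := by
  simp only [IsDepthMinor, reachable_and_dist_le_iff_edist_le]

lemma IsDepthMinor.refl {V : Type} (G : SimpleGraph V) : IsDepthMinor G G 0 := by
  refine isDepthMinor_iff_edist.mpr ⟨fun w => {w}, fun w => ⟨⟨w, rfl⟩, ?_⟩,
    fun w₁ w₂ h => Set.disjoint_singleton.mpr h, fun w₁ w₂ h => ⟨w₁, rfl, w₂, rfl, h⟩⟩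
  rintro ⟨v, rfl⟩
  simp

lemma exists_center_biUnion_of_star {V W : Type} {G : SimpleGraph V} {H : SimpleGraph W}
    {B : W → Set V} {s : ℕ} (hB : ∀ w, ∃ c : B w, ∀ v : B w, (G.induce (B w)).edist c v ≤ s)
    (hBH : ∀ ⦃w₁ w₂⦄, H.Adj w₁ w₂ → ∃ v₁ ∈ B w₁, ∃ v₂ ∈ B w₂, G.Adj v₁ v₂)
    {S : Set W} (hS : ∃ c : S, ∀ w : S, (H.induce S).edist c w ≤ 1) :
    ∃ c : ↥(⋃ w ∈ S, B w), ∀ v : ↥(⋃ w ∈ S, B w),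
      (G.induce (⋃ w ∈ S, B w)).edist c v ≤ ↑(3 * s + 1) := by
  set U := ⋃ w ∈ S, B w
  have hBU : ∀ w ∈ S, B w ⊆ U := fun w hw => Set.subset_biUnion_of_mem hw
  have hdiam : ∀ w (hw : w ∈ S) {a b : V} (ha : a ∈ B w) (hb : b ∈ B w),
      (G.induce U).edist ⟨a, hBU w hw ha⟩ ⟨b, hBU w hw hb⟩ ≤ 2 * s := fun w hw a b ha hb =>
    (edist_induce_le_of_subset (hBU w hw) ha hb).trans
      (edist_le_two_mul_of_forall_edist_le (hB w).choose_spec _ _)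
  obtain ⟨⟨w₀, hw₀⟩, hw₀S⟩ := hS
  obtain ⟨⟨c₀, hc₀⟩, hc₀B⟩ := hB w₀
  refine ⟨⟨c₀, hBU w₀ hw₀ hc₀⟩, ?_⟩
  rintro ⟨v, hv⟩
  obtain ⟨w, hw, hvw⟩ := Set.mem_iUnion₂.mp hv
  rcases edist_le_one_iff_adj_or_eq.mp (hw₀S ⟨w, hw⟩) with hadj | heq
  · obtain ⟨u₀, hu₀, u₁, hu₁, hu⟩ := hBH hadj
    have hedge : (G.induce U).Adj ⟨u₀, hBU w₀ hw₀ hu₀⟩ ⟨u₁, hBU w hw hu₁⟩ := hu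
    calc _ ≤ (G.induce U).edist ⟨c₀, _⟩ ⟨u₀, hBU w₀ hw₀ hu₀⟩ +
          (G.induce U).edist ⟨u₀, _⟩ ⟨u₁, hBU w hw hu₁⟩ + (G.induce U).edist ⟨u₁, _⟩ ⟨v, hv⟩ :=
          SimpleGraph.edist_triangle.trans (add_le_add_left SimpleGraph.edist_triangle _)
      _ ≤ s + 1 + 2 * s := by
          gcongr
          · exact (edist_induce_le_of_subset (hBU w₀ hw₀) hc₀ hu₀).trans (hc₀B _)
          · exact (edist_eq_one_iff_adj.mpr hedge).le
          · exact hdiam w hw hu₁ hvw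
      _ = ↑(3 * s + 1) := by push_cast; ring
  · obtain rfl : w₀ = w := congrArg Subtype.val heq
    calc _ ≤ (G.induce (B w₀)).edist ⟨c₀, hc₀⟩ ⟨v, hvw⟩ := edist_induce_le_of_subset _ _ _
      _ ≤ s := hc₀B _
      _ ≤ ↑(3 * s + 1) := by exact_mod_cast (by omega : s ≤ 3 * s + 1)

lemma IsDepthMinor.comp {V W X : Type} {G : SimpleGraph V} {H : SimpleGraph W}
    {K : SimpleGraph X} {s : ℕ} (hGH : IsDepthMinor G H s) (hHK : IsDepthMinor H K 1) :
    IsDepthMinor G K (3 * s + 1) := by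
  obtain ⟨B, hBc, hBd, hBH⟩ := isDepthMinor_iff_edist.mp hGH
  obtain ⟨C, hCc, hCd, hCK⟩ := isDepthMinor_iff_edist.mp hHK
  refine isDepthMinor_iff_edist.mpr ⟨fun x => ⋃ w ∈ C x, B w,
    fun x => exists_center_biUnion_of_star hBc hBH (hCc x), fun x₁ x₂ hx => ?_, fun x₁ x₂ hx => ?_⟩
  · simp only [Set.disjoint_iUnion₂_left, Set.disjoint_iUnion₂_right]
    exact fun w₂ hw₂ w₁ hw₁ => hBd ((hCd hx).ne_of_mem hw₁ hw₂)
  · obtain ⟨w₁, hw₁, w₂, hw₂, hw⟩ := hCK hx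
    obtain ⟨v₁, hv₁, v₂, hv₂, hv⟩ := hBH hw
    exact ⟨v₁, Set.mem_biUnion hw₁ hv₁, v₂, Set.mem_biUnion hw₂ hv₂, hv⟩

lemma three_pow_succ_sub_one_div_two (n : ℕ) :
    (3 ^ (n + 1) - 1) / 2 = 3 * ((3 ^ n - 1) / 2) + 1 := by
  obtain ⟨m, hm⟩ : Odd (3 ^ n) := Odd.pow (by decide)
  rw [pow_succ]
  omega

theorem stmt8_general (r : ℕ) (W : ℕ → Type)
    (H : ∀ k, SimpleGraph (W k))
    (hstep : ∀ k < r, IsDepthMinor (H k) (H (k + 1)) 1) :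
    IsDepthMinor (H 0) (H r) ((3 ^ r - 1) / 2) := by
  induction r with
  | zero => simpa using IsDepthMinor.refl (H 0)
  | succ n ih =>
    rw [three_pow_succ_sub_one_div_two]
    exact (ih fun k hk => hstep k (by omega)).comp (hstep n n.lt_succ_self)

/-- Taking a depth-1 minor of a depth-1 minor iteratively `r` times yields a
depth-`(3^r − 1)/2` minor of the original graph: if `H 0 = G` and each `H (k+1)` is a depth-1
minor of `H k`, then `H r` is a depth-`((3^r − 1)/2)` minor of `G`. -/
theorem stmt8 (r : ℕ) (W : ℕ → Type) [∀ k, Fintype (W k)]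
    (H : ∀ k, SimpleGraph (W k))
    (hstep : ∀ k < r, IsDepthMinor (H k) (H (k + 1)) 1) :
    IsDepthMinor (H 0) (H r) ((3 ^ r - 1) / 2) :=
  stmt8_general r W H hstep
end

section
/- Let G be a graph, let U₁, …, U_l be a partition of V(G), and for each i let S_i be a minimum dominating set of the induced subgraph G[U_i]. Let S* be any dominating set of G and let B be the set of vertices having a neighbor in a different part of the partition. Then S = ⋃ᵢ S_i is a dominating set of G with |S| ≤ |S*| + |B|. -/
/-- The closed neighborhood `N[v]` of a vertex. -/
def closedNbr {V : Type} (G : SimpleGraph V) (v : V) : Set V :=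
  insert v (G.neighborSet v)

/-- `N[A] = ⋃ a ∈ A, N[a]`. -/
def closedNbrs {V : Type} (G : SimpleGraph V) (A : Set V) : Set V :=
  ⋃ a ∈ A, closedNbr G a

/-- `D` is a dominating set of `G`. -/
def IsDominatingSet {V : Type} (G : SimpleGraph V) (D : Set V) : Prop :=
  ∀ v : V, v ∈ closedNbrs G D

/-- `S` dominates the subgraph of `G` induced on `U`. -/
def DominatesOn {V : Type} (G : SimpleGraph V) (U S : Set V) : Prop :=
  S ⊆ U ∧ ∀ v ∈ U, v ∈ S ∨ ∃ u ∈ S, G.Adj u v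

/-!
Gluing dominating sets of the parts dominates `G`, since the parts cover `V`. For the bound,
`(S* ∪ B) ∩ U_i` dominates `G[U_i]`: a vertex of `U_i` dominated by `S*` from another part lies
in `B`. By minimality `|S_i| ≤ |(S* ∪ B) ∩ U_i|`, and these pieces are disjoint subsets of
`S* ∪ B`.
-/

section

variable {V : Type} (G : SimpleGraph V)

lemma mem_closedNbrs_iff {A : Set V} {v : V} :
    v ∈ closedNbrs G A ↔ v ∈ A ∨ ∃ u ∈ A, G.Adj u v := by
  simp only [closedNbrs, closedNbr, Set.mem_iUnion, Set.mem_insert_iff,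
    SimpleGraph.mem_neighborSet, exists_prop]
  constructor
  · rintro ⟨u, hu, rfl | huv⟩
    exacts [Or.inl hu, Or.inr ⟨u, hu, huv⟩]
  · rintro (hv | ⟨u, hu, huv⟩)
    exacts [⟨v, hv, Or.inl rfl⟩, ⟨u, hu, Or.inr huv⟩]

lemma isDominatingSet_iUnion {ι : Type*} {U S : ι → Set V} (hcover : (⋃ i, U i) = Set.univ)
    (hS : ∀ i, DominatesOn G (U i) (S i)) : IsDominatingSet G (⋃ i, S i) := by
  intro v
  obtain ⟨i, hvi⟩ := Set.mem_iUnion.1 (hcover ▸ Set.mem_univ v)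
  rw [mem_closedNbrs_iff]
  rcases (hS i).2 v hvi with hv | ⟨u, hu, huv⟩
  · exact Or.inl (Set.mem_iUnion.2 ⟨i, hv⟩)
  · exact Or.inr ⟨u, Set.mem_iUnion.2 ⟨i, hu⟩, huv⟩

lemma IsDominatingSet.dominatesOn_union_inter {D B U : Set V} (hD : IsDominatingSet G D)
    (hB : ∀ v ∈ U, ∀ u ∉ U, G.Adj v u → v ∈ B) : DominatesOn G U ((D ∪ B) ∩ U) := by
  refine ⟨Set.inter_subset_right, fun v hv => ?_⟩
  rcases (mem_closedNbrs_iff G).1 (hD v) with hvD | ⟨u, huD, huv⟩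
  · exact Or.inl ⟨Or.inl hvD, hv⟩
  · by_cases hu : u ∈ U
    · exact Or.inr ⟨u, ⟨Or.inl huD, hu⟩, huv⟩
    · exact Or.inl ⟨Or.inr (hB v hv u hu huv.symm), hv⟩

end

lemma Set.sum_ncard_inter_le {α ι : Type*} [Fintype ι] {X : Set α} (hX : X.Finite)
    {U : ι → Set α} (hU : Pairwise fun i j => Disjoint (U i) (U j)) :
    ∑ i, (X ∩ U i).ncard ≤ X.ncard := by
  rw [← finsum_eq_sum_of_fintype, ← Set.ncard_iUnion_of_finite (fun i => hX.inter_of_left _)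
    (fun i j hij => (hU hij).mono Set.inter_subset_right Set.inter_subset_right)]
  exact Set.ncard_le_ncard (Set.iUnion_subset fun i => Set.inter_subset_left) hX

/-- Let `U₁, …, U_l` partition `V(G)`, let `S_i` be a minimum dominating set of `G[U_i]`, let
`S*` be any dominating set of `G`, and let `B` be the set of vertices with a neighbor in a
different part.  Then `S = ⋃ S_i` is a dominating set of `G` with `|S| ≤ |S*| + |B|`. -/
theorem stmt15 {V : Type} [Fintype V] (G : SimpleGraph V)
    (l : ℕ) (U : Fin l → Set V)
    (hdisj : Pairwise fun i j => Disjoint (U i) (U j))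
    (hcover : (⋃ i, U i) = Set.univ)
    (S : Fin l → Set V)
    (hSdom : ∀ i, DominatesOn G (U i) (S i))
    (hSmin : ∀ i, ∀ T : Set V, DominatesOn G (U i) T → (S i).ncard ≤ T.ncard)
    (Sstar : Set V) (hSstar : IsDominatingSet G Sstar)
    (B : Set V)
    (hB : B = {v | ∃ u, G.Adj v u ∧ ∃ i j, i ≠ j ∧ v ∈ U i ∧ u ∈ U j}) :
    IsDominatingSet G (⋃ i, S i) ∧ (⋃ i, S i).ncard ≤ Sstar.ncard + B.ncard := by
  refine ⟨isDominatingSet_iUnion G hcover hSdom, ?_⟩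
  have hboundary : ∀ i, ∀ v ∈ U i, ∀ u ∉ U i, G.Adj v u → v ∈ B := by
    intro i v hv u hu hvu
    obtain ⟨j, huj⟩ := Set.mem_iUnion.1 (hcover ▸ Set.mem_univ u)
    exact hB ▸ ⟨u, hvu, i, j, fun hij => hu (hij ▸ huj), hv, huj⟩
  calc (⋃ i, S i).ncard ≤ ∑ i, (S i).ncard := Set.ncard_iUnion_le_of_fintype S
    _ ≤ ∑ i, ((Sstar ∪ B) ∩ U i).ncard := Finset.sum_le_sum fun i _ =>
        hSmin i _ (hSstar.dominatesOn_union_inter G (hboundary i))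
    _ ≤ (Sstar ∪ B).ncard := Set.sum_ncard_inter_le (Set.toFinite _) hdisj
    _ ≤ Sstar.ncard + B.ncard := Set.ncard_union_le _ _
end

section
/- Let G be a graph with dominating set D computed such that every vertex v ∉ D has a set A_v ⊆ V(G)\{v} of size at most 2c with N(v) ⊆ N[A_v] (for a constant c). Suppose each undominated vertex u chooses dom(u) ∈ N[u] of maximum residual degree. If dom(u) ≠ m for the dominator m ∈ M of u (with {m,u} ∈ E'), then the E'-degree of m is at most the degree of dom(u) in the relevant residual graph; in particular, if dom(u) has degree at most 4c + 2c(t−1), then m has at most 4c + 2c(t−1) E'-neighbors. -/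
/-- Setting of the greedy Phase-2 analysis: `D` is such that every `v ∉ D` has a set `A_v` of
at most `2c` other vertices with `N(v) ⊆ N[A_v]`; `M` is a dominating set with assignment edge
set `E' ⊆ E(G)`; the vertex `u` is undominated by `D`, `{m, u} ∈ E'`, all `E'`-neighbors of `m`
are undominated by `D`, and `d = dom(u) ∈ N[u]` maximizes the residual degree
`|N[w] \ N[D]|` over `w ∈ N[u]`, with `d ≠ m`.  Then the number of `E'`-neighbors of `m` is at
most the residual degree of `d`; in particular, if the residual degree of `d` is at most
`4c + 2c(t−1)`, then `m` has at most `4c + 2c(t−1)` `E'`-neighbors. -/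
theorem stmt17 {V : Type} [Fintype V] (G : SimpleGraph V)
    (c t : ℕ) (ht : 3 ≤ t)
    (D : Set V)
    (hD : ∀ v ∉ D, ∃ A : Set V, v ∉ A ∧ A.ncard ≤ 2 * c ∧
      G.neighborSet v ⊆ closedNbrs G A)
    (M : Set V) (hM : IsDominatingSet G M)
    (E' : Set (Sym2 V)) (hE'G : E' ⊆ G.edgeSet)
    (m u d : V) (hmM : m ∈ M) (hmu : s(m, u) ∈ E')
    (hu : u ∉ closedNbrs G D)
    (hstar : {x | s(x, m) ∈ E'} ⊆ Set.univ \ closedNbrs G D)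
    (hd : d ∈ closedNbr G u)
    (hmax : ∀ w ∈ closedNbr G u,
      (closedNbr G w \ closedNbrs G D).ncard ≤ (closedNbr G d \ closedNbrs G D).ncard)
    (hne : d ≠ m) :
    {x | s(x, m) ∈ E'}.ncard ≤ (closedNbr G d \ closedNbrs G D).ncard ∧
    ((closedNbr G d \ closedNbrs G D).ncard ≤ 4 * c + 2 * c * (t - 1) →
      {x | s(x, m) ∈ E'}.ncard ≤ 4 * c + 2 * c * (t - 1)) := by
  have hsub : {x | s(x, m) ∈ E'} ⊆ closedNbr G m \ closedNbrs G D := by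
    intro x hx
    refine ⟨?_, (hstar hx).2⟩
    have hadj : G.Adj x m := (SimpleGraph.mem_edgeSet G).1 (hE'G hx)
    exact Set.mem_insert_of_mem _ hadj.symm
  have hmu' : m ∈ closedNbr G u := by
    have hadj : G.Adj m u := (SimpleGraph.mem_edgeSet G).1 (hE'G hmu)
    exact Set.mem_insert_of_mem _ hadj.symm
  have h1 : {x | s(x, m) ∈ E'}.ncard ≤ (closedNbr G m \ closedNbrs G D).ncard :=
    Set.ncard_le_ncard hsub (Set.toFinite _)
  have h2 := hmax m hmu'
  exact ⟨h1.trans h2, fun h => (h1.trans h2).trans h⟩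
end
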